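/- For every integer l ≥ 1, the probability under ρ_l that the minimal label V_* of the tree equals 0 is 4/((l+1)(l+2)(l+3)). -/

import Mathlib

open scoped ENNReal

/-- Labeled plane trees: each node carries an integer label and an ordered list of subtrees. -/
inductive LTree where
  | node : ℤ → List LTree → LTree
deriving Inhabited

namespace LTree

/-- The label of the root. -/
def label : LTree → ℤ
  | node l _ => l

mutual
  /-- Number of edges of a labeled tree. -/
  def edges : LTree → ℕ
    | node _ cs => edgesL cs
  def edgesL : List LTree → ℕ
    | [] => 0
    | t :: ts => edges t + 1 + edgesL ts
end

mutual
  /-- Minimal label in the tree. -/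
  def minLabel : LTree → ℤ
    | node l cs => minLabelL cs l
  def minLabelL : List LTree → ℤ → ℤ
    | [], m => m
    | t :: ts, m => minLabelL ts (min m (minLabel t))
end

/-- A labeled tree is valid if the labels of any two neighbouring vertices
differ by at most one in absolute value. -/
inductive Valid : LTree → Prop where
  | node (l : ℤ) (cs : List LTree) :
      (∀ c ∈ cs, |label c - l| ≤ 1) → (∀ c ∈ cs, Valid c) → Valid (.node l cs)

end LTree

/-- The measure `ρ_l`: the law of a Galton–Watson tree with geometric(1/2) offspring
distribution, root label `l`, and i.i.d. uniform `{-1,0,1}` label increments along edges.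
It is the atomic measure giving mass `(1/2)·12^{-n}` to each valid labeled tree with `n`
edges and root label `l`. -/
noncomputable def rho (l : ℤ) (A : Set LTree) : ℝ≥0∞ :=
  ∑' θ : LTree,
    Set.indicator ({θ : LTree | θ.label = l ∧ θ.Valid} ∩ A)
      (fun θ => (2 : ℝ≥0∞)⁻¹ * (12 : ℝ≥0∞)⁻¹ ^ θ.edges) θ

namespace LTree

@[simp] lemma label_node (l : ℤ) (cs : List LTree) : label (node l cs) = l := rfl
@[simp] lemma edges_node (l : ℤ) (cs : List LTree) : edges (node l cs) = edgesL cs := by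
  rw [edges]

lemma valid_node_iff {l : ℤ} {cs : List LTree} :
    Valid (node l cs) ↔ (∀ c ∈ cs, |label c - l| ≤ 1 ∧ Valid c) := by
  constructor
  · rintro ⟨_, _, h1, h2⟩ c hc; exact ⟨h1 c hc, h2 c hc⟩
  · intro h; exact Valid.node l cs (fun c hc => (h c hc).1) (fun c hc => (h c hc).2)

lemma le_minLabelL {k : ℤ} : ∀ (cs : List LTree) (m : ℤ),
    k ≤ minLabelL cs m ↔ k ≤ m ∧ ∀ c ∈ cs, k ≤ minLabel c
  | [], m => by simp [minLabelL]
  | t :: ts, m => by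
    rw [minLabelL, le_minLabelL ts]
    simp only [le_min_iff, List.mem_cons]
    constructor
    · rintro ⟨⟨h1, h2⟩, h3⟩
      exact ⟨h1, by rintro c (rfl | hc); exacts [h2, h3 c hc]⟩
    · rintro ⟨h1, h2⟩
      exact ⟨⟨h1, h2 t (Or.inl rfl)⟩, fun c hc => h2 c (Or.inr hc)⟩

lemma le_minLabel_node {k l : ℤ} {cs : List LTree} :
    k ≤ minLabel (node l cs) ↔ k ≤ l ∧ ∀ c ∈ cs, k ≤ minLabel c := by
  rw [minLabel]; exact le_minLabelL cs l

lemma minLabel_le_label : ∀ θ : LTree, minLabel θ ≤ label θ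
  | node l cs => by
    have := (le_minLabelL (k := minLabel (node l cs)) cs l).mp (by rw [minLabel])
    simpa using this.1

mutual
  def shift (k : ℤ) : LTree → LTree
    | .node l cs => .node (l + k) (shiftL k cs)
  def shiftL (k : ℤ) : List LTree → List LTree
    | [] => []
    | t :: ts => shift k t :: shiftL k ts
end

lemma shiftL_eq_map (k : ℤ) : ∀ cs : List LTree, shiftL k cs = cs.map (shift k)
  | [] => rfl
  | t :: ts => by rw [shiftL, shiftL_eq_map k ts, List.map_cons]

@[simp] lemma label_shift (k : ℤ) (θ : LTree) : label (shift k θ) = label θ + k := by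
  cases θ with
  | node l cs => rw [shift]; simp

mutual
  theorem edges_shift (k : ℤ) : ∀ θ : LTree, (shift k θ).edges = θ.edges
    | .node l cs => by simp only [shift, edges_node, edgesL_shiftL k cs]
  theorem edgesL_shiftL (k : ℤ) : ∀ cs : List LTree, edgesL (shiftL k cs) = edgesL cs
    | [] => rfl
    | t :: ts => by simp only [shiftL, edgesL, edges_shift k t, edgesL_shiftL k ts]
end

mutual
  theorem minLabel_shift (k : ℤ) : ∀ θ : LTree, (shift k θ).minLabel = θ.minLabel + k
    | .node l cs => by
      rw [shift, minLabel, minLabel, minLabelL_shiftL k cs]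
  theorem minLabelL_shiftL (k : ℤ) : ∀ (cs : List LTree) (m : ℤ),
      minLabelL (shiftL k cs) (m + k) = minLabelL cs m + k
    | [], m => by simp only [shiftL, minLabelL]
    | t :: ts, m => by
      simp only [shiftL, minLabelL, minLabel_shift k t, min_add_add_right,
        minLabelL_shiftL k ts]
end

mutual
  theorem shift_shift (k k' : ℤ) : ∀ θ : LTree, shift k (shift k' θ) = shift (k' + k) θ
    | .node l cs => by simp only [shift, shiftL_shiftL k k' cs, add_assoc]
  theorem shiftL_shiftL (k k' : ℤ) : ∀ cs : List LTree,
      shiftL k (shiftL k' cs) = shiftL (k' + k) cs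
    | [] => rfl
    | t :: ts => by simp only [shiftL, shift_shift k k' t, shiftL_shiftL k k' ts]
end

mutual
  theorem shift_zero : ∀ θ : LTree, shift 0 θ = θ
    | .node l cs => by simp only [shift, shiftL_zero cs, add_zero]
  theorem shiftL_zero : ∀ cs : List LTree, shiftL 0 cs = cs
    | [] => rfl
    | t :: ts => by simp only [shiftL, shift_zero t, shiftL_zero ts]
end

theorem Valid.shift {k : ℤ} {θ : LTree} (h : Valid θ) : Valid (shift k θ) := by
  induction h with
  | node l cs h1 h2 ih =>
    rw [LTree.shift, shiftL_eq_map]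
    refine Valid.node _ _ ?_ ?_
    · rintro c' hc'
      rcases List.mem_map.mp hc' with ⟨c, hc, rfl⟩
      rw [label_shift]
      have h := h1 c hc
      have e : label c + k - (l + k) = label c - l := by ring
      rw [e]; exact h
    · rintro c' hc'
      rcases List.mem_map.mp hc' with ⟨c, hc, rfl⟩
      exact ih c hc

lemma valid_shift_iff {k : ℤ} {θ : LTree} : Valid (shift k θ) ↔ Valid θ := by
  constructor
  · intro h
    have := h.shift (k := -k)
    rwa [shift_shift, add_neg_cancel, shift_zero] at this
  · exact Valid.shift

def shiftEquiv (k : ℤ) : LTree ≃ LTree where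
  toFun := shift k
  invFun := shift (-k)
  left_inv θ := by rw [shift_shift, add_neg_cancel, shift_zero]
  right_inv θ := by rw [shift_shift, neg_add_cancel, shift_zero]


end LTree


namespace LTreeSum
open LTree
noncomputable section

open Classical in
/-- Indicator with a fixed classical decidability instance. -/
noncomputable def ind (P : Prop) (v : ℝ≥0∞) : ℝ≥0∞ := if P then v else 0

lemma ind_pos {P : Prop} (h : P) (v : ℝ≥0∞) : ind P v = v := if_pos h
lemma ind_neg {P : Prop} (h : ¬P) (v : ℝ≥0∞) : ind P v = 0 := if_neg h

lemma ind_congr {P Q : Prop} {v w : ℝ≥0∞} (h : P ↔ Q) (hv : v = w) : ind P v = ind Q w := by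
  by_cases hP : P
  · rw [ind_pos hP, ind_pos (h.mp hP), hv]
  · rw [ind_neg hP, ind_neg (fun hQ => hP (h.mpr hQ))]

lemma ind_mono {P Q : Prop} {v : ℝ≥0∞} (h : P → Q) : ind P v ≤ ind Q v := by
  by_cases hP : P
  · rw [ind_pos hP, ind_pos (h hP)]
  · rw [ind_neg hP]; exact zero_le

lemma ind_mul (P Q : Prop) (v w : ℝ≥0∞) : ind P v * ind Q w = ind (P ∧ Q) (v * w) := by
  by_cases hP : P
  · by_cases hQ : Q
    · rw [ind_pos hP, ind_pos hQ, ind_pos ⟨hP, hQ⟩]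
    · rw [ind_neg hQ w, mul_zero, ind_neg (show ¬(P ∧ Q) from fun h => hQ h.2) (v * w)]
  · rw [ind_neg hP v, zero_mul, ind_neg (show ¬(P ∧ Q) from fun h => hP h.1) (v * w)]

def x : ℝ≥0∞ := (12 : ℝ≥0∞)⁻¹

def eqv : LTree ≃ ℤ × List LTree where
  toFun θ := match θ with | .node l cs => (l, cs)
  invFun p := .node p.1 p.2
  left_inv θ := by cases θ; rfl
  right_inv p := rfl

lemma tsum_tree (f : LTree → ℝ≥0∞) :
    ∑' θ, f θ = ∑' (m : ℤ) (cs : List LTree), f (.node m cs) := by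
  rw [← eqv.symm.tsum_eq f, ENNReal.tsum_prod']
  rfl

lemma tsum_list (g : List LTree → ℝ≥0∞) :
    ∑' cs, g cs = g [] + ∑' p : LTree × List LTree, g (p.1 :: p.2) := by
  have h1 : ∑' cs, g cs
      = ∑' cs : List LTree, (ind (cs = []) (g cs) + ind (cs ≠ []) (g cs)) := by
    refine tsum_congr fun cs => ?_
    by_cases h : cs = []
    · rw [ind_pos h, ind_neg (fun h' => h' h), add_zero]
    · rw [ind_neg h, ind_pos h, zero_add]
  rw [h1, ENNReal.tsum_add]
  congr 1
  · rw [tsum_eq_single ([] : List LTree) (fun cs hcs => ind_neg hcs _), ind_pos rfl]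
  · have hinj : Function.Injective (fun p : LTree × List LTree => p.1 :: p.2) := by
      rintro ⟨a, as⟩ ⟨b, bs⟩ h
      simpa using h
    have hsupp : Function.support (fun cs : List LTree => ind (cs ≠ []) (g cs))
        ⊆ Set.range (fun p : LTree × List LTree => p.1 :: p.2) := by
      intro cs hcs
      rcases cs with _ | ⟨c, cs⟩
      · exact absurd (ind_neg (fun h => h rfl) _) hcs
      · exact ⟨(c, cs), rfl⟩
    rw [← Function.Injective.tsum_eq hinj hsupp]
    exact tsum_congr fun p => ind_pos (List.cons_ne_nil _ _) _

lemma tsum_cond (C : LTree → Prop) (l : ℤ) :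
    (∑' θ, ind (label θ = l ∧ C θ) (x ^ θ.edges))
      = ∑' cs : List LTree, ind (C (.node l cs)) (x ^ edgesL cs) := by
  rw [tsum_tree]
  rw [tsum_eq_single l ?_]
  · exact tsum_congr fun cs => ind_congr (by simp) (by rw [edges_node])
  · intro m hm
    have h : ∀ cs : List LTree,
        ind (label (LTree.node m cs) = l ∧ C (.node m cs)) (x ^ (LTree.node m cs).edges) = 0 := by
      intro cs
      refine ind_neg ?_ _
      rintro ⟨h1, -⟩
      rw [label_node] at h1
      exact hm h1
    simp only [h, tsum_zero]

/-- List-level sum with each member satisfying `D`. -/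
def LS (D : LTree → Prop) : ℝ≥0∞ :=
  ∑' cs : List LTree, ind (∀ c ∈ cs, D c) (x ^ edgesL cs)

lemma LS_rec (D : LTree → Prop) :
    LS D = 1 + (∑' c : LTree, ind (D c) (x ^ (edges c + 1))) * LS D := by
  conv_lhs => rw [LS, tsum_list]
  congr 1
  · rw [ind_pos (by intro c hc; cases hc) _]
    simp [edgesL]
  · have hterm : ∀ (c : LTree) (cs : List LTree),
        ind (∀ c' ∈ c :: cs, D c') (x ^ edgesL (c :: cs))
          = ind (D c) (x ^ (edges c + 1)) * ind (∀ c' ∈ cs, D c') (x ^ edgesL cs) := by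
      intro c cs
      rw [ind_mul]
      refine ind_congr List.forall_mem_cons ?_
      rw [edgesL, pow_add]
    calc (∑' p : LTree × List LTree, ind (∀ c ∈ p.1 :: p.2, D c) (x ^ edgesL (p.1 :: p.2)))
        = ∑' p : LTree × List LTree,
            ind (D p.1) (x ^ (edges p.1 + 1)) * ind (∀ c ∈ p.2, D c) (x ^ edgesL p.2) :=
          tsum_congr fun p => hterm p.1 p.2
      _ = ∑' c : LTree, ∑' cs : List LTree,
            ind (D c) (x ^ (edges c + 1)) * ind (∀ c' ∈ cs, D c') (x ^ edgesL cs) :=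
          ENNReal.tsum_prod'
      _ = ∑' c : LTree, ind (D c) (x ^ (edges c + 1)) * LS D :=
          tsum_congr fun c => ENNReal.tsum_mul_left
      _ = (∑' c : LTree, ind (D c) (x ^ (edges c + 1))) * LS D := ENNReal.tsum_mul_right

lemma child_split (P : LTree → Prop) (l : ℤ) :
    (∑' c : LTree, ind (|label c - l| ≤ 1 ∧ P c) (x ^ (edges c + 1)))
      = x * ((∑' c : LTree, ind (label c = l - 1 ∧ P c) (x ^ edges c))
           + ((∑' c : LTree, ind (label c = l ∧ P c) (x ^ edges c))
           + (∑' c : LTree, ind (label c = l + 1 ∧ P c) (x ^ edges c)))) := by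
  rw [← ENNReal.tsum_add, ← ENNReal.tsum_add, ← ENNReal.tsum_mul_left]
  apply tsum_congr
  intro c
  have hpow : x ^ (edges c + 1) = x * x ^ edges c := by rw [pow_succ, mul_comm]
  by_cases hP : P c
  · by_cases habs : |label c - l| ≤ 1
    · have habs' := abs_le.mp habs
      have h3 : label c = l - 1 ∨ label c = l ∨ label c = l + 1 := by omega
      rw [ind_pos ⟨habs, hP⟩, hpow]
      rcases h3 with h | h | h
      · rw [ind_pos ⟨h, hP⟩, ind_neg (by rintro ⟨h', -⟩; omega) _,
          ind_neg (by rintro ⟨h', -⟩; omega) _]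
        ring
      · rw [ind_neg (by rintro ⟨h', -⟩; omega) _, ind_pos ⟨h, hP⟩,
          ind_neg (by rintro ⟨h', -⟩; omega) _]
        ring
      · rw [ind_neg (by rintro ⟨h', -⟩; omega) _, ind_neg (by rintro ⟨h', -⟩; omega) _,
          ind_pos ⟨h, hP⟩]
        ring
    · have habs' : ¬(-1 ≤ label c - l ∧ label c - l ≤ 1) := fun h => habs (abs_le.mpr h)
      rw [ind_neg (by rintro ⟨h', -⟩; exact habs h') _,
        ind_neg (by rintro ⟨h', -⟩; apply habs'; omega) _,
        ind_neg (by rintro ⟨h', -⟩; apply habs'; omega) _,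
        ind_neg (by rintro ⟨h', -⟩; apply habs'; omega) _]
      simp
  · rw [ind_neg (by rintro ⟨-, h'⟩; exact hP h') _, ind_neg (by rintro ⟨-, h'⟩; exact hP h') _,
      ind_neg (by rintro ⟨-, h'⟩; exact hP h') _, ind_neg (by rintro ⟨-, h'⟩; exact hP h') _]
    simp

end
end LTreeSum

namespace LTreeSum
open LTree
noncomputable section

def tZ (l : ℤ) : ℝ≥0∞ :=
  ∑' θ : LTree, ind (label θ = l ∧ Valid θ) (x ^ edges θ)

def tS (l : ℤ) : ℝ≥0∞ :=
  ∑' θ : LTree, ind (label θ = l ∧ (Valid θ ∧ 1 ≤ minLabel θ)) (x ^ edges θ)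

def tZt (n : ℕ) (l : ℤ) : ℝ≥0∞ :=
  ∑' θ : LTree, ind (label θ = l ∧ (Valid θ ∧ edges θ ≤ n)) (x ^ edges θ)

lemma tZ_eq_LS (l : ℤ) : tZ l = LS (fun c => |label c - l| ≤ 1 ∧ Valid c) := by
  rw [tZ, tsum_cond Valid l, LS]
  exact tsum_congr fun cs => ind_congr valid_node_iff rfl

lemma tZ_rec (l : ℤ) : tZ l = 1 + x * (tZ (l-1) + (tZ l + tZ (l+1))) * tZ l := by
  conv_lhs => rw [tZ_eq_LS l, LS_rec]
  rw [child_split Valid l, ← tZ_eq_LS]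
  rfl

lemma tS_eq_LS (l : ℤ) (hl : 1 ≤ l) :
    tS l = LS (fun c => |label c - l| ≤ 1 ∧ (Valid c ∧ 1 ≤ minLabel c)) := by
  rw [tS, tsum_cond (fun θ => Valid θ ∧ 1 ≤ minLabel θ) l, LS]
  refine tsum_congr fun cs => ind_congr ?_ rfl
  rw [valid_node_iff, le_minLabel_node]
  constructor
  · rintro ⟨h1, -, h3⟩ c hc
    exact ⟨(h1 c hc).1, (h1 c hc).2, h3 c hc⟩
  · intro h
    exact ⟨fun c hc => ⟨(h c hc).1, (h c hc).2.1⟩, hl, fun c hc => (h c hc).2.2⟩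

lemma tS_rec (l : ℤ) (hl : 1 ≤ l) :
    tS l = 1 + x * (tS (l-1) + (tS l + tS (l+1))) * tS l := by
  conv_lhs => rw [tS_eq_LS l hl, LS_rec]
  rw [child_split (fun c => Valid c ∧ 1 ≤ minLabel c) l, ← tS_eq_LS l hl]
  rfl

lemma tS_eq_zero (l : ℤ) (hl : l ≤ 0) : tS l = 0 := by
  rw [tS]
  have h : ∀ θ : LTree,
      ind (label θ = l ∧ (Valid θ ∧ 1 ≤ minLabel θ)) (x ^ edges θ) = 0 := by
    intro θ
    refine ind_neg ?_ _
    rintro ⟨h1, -, h3⟩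
    have := minLabel_le_label θ
    omega
  simp only [h, tsum_zero]

/-- Truncated list sums. -/
def LSt (D : LTree → Prop) (n : ℕ) : ℝ≥0∞ :=
  ∑' cs : List LTree, ind ((∀ c ∈ cs, D c) ∧ edgesL cs ≤ n) (x ^ edgesL cs)

lemma tZt_eq_LSt (n : ℕ) (l : ℤ) :
    tZt n l = LSt (fun c => |label c - l| ≤ 1 ∧ Valid c) n := by
  rw [tZt, tsum_cond (fun θ => Valid θ ∧ edges θ ≤ n) l, LSt]
  refine tsum_congr fun cs => ind_congr ?_ rfl
  rw [edges_node]
  exact and_congr valid_node_iff Iff.rfl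

lemma LSt_zero_le (D : LTree → Prop) : LSt D 0 ≤ 1 := by
  rw [LSt, tsum_list]
  have h2 : (∑' p : LTree × List LTree,
      ind ((∀ c ∈ p.1 :: p.2, D c) ∧ edgesL (p.1 :: p.2) ≤ 0) (x ^ edgesL (p.1 :: p.2))) = 0 := by
    have h : ∀ p : LTree × List LTree,
        ind ((∀ c ∈ p.1 :: p.2, D c) ∧ edgesL (p.1 :: p.2) ≤ 0) (x ^ edgesL (p.1 :: p.2)) = 0 := by
      rintro ⟨c, cs⟩
      refine ind_neg ?_ _
      rintro ⟨-, h⟩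
      rw [edgesL] at h
      omega
    simp only [h, tsum_zero]
  rw [h2, add_zero]
  refine le_trans (ind_mono (fun _ => trivial)) ?_
  rw [ind_pos trivial _]
  simp [edgesL]

lemma LSt_succ_le (D : LTree → Prop) (n : ℕ) :
    LSt D (n+1) ≤ 1 + (∑' c : LTree, ind (D c ∧ edges c ≤ n) (x ^ (edges c + 1)))
      * LSt D n := by
  rw [LSt, tsum_list]
  have h1 : ind ((∀ c ∈ ([] : List LTree), D c) ∧ edgesL ([] : List LTree) ≤ n + 1)
      (x ^ edgesL ([] : List LTree)) ≤ 1 := by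
    refine le_trans (ind_mono (fun _ => trivial)) ?_
    rw [ind_pos trivial _]
    simp [edgesL]
  refine add_le_add h1 ?_
  have hterm : ∀ (c : LTree) (cs : List LTree),
      ind ((∀ c' ∈ c :: cs, D c') ∧ edgesL (c :: cs) ≤ n + 1) (x ^ edgesL (c :: cs))
        ≤ ind (D c ∧ edges c ≤ n) (x ^ (edges c + 1))
          * ind ((∀ c' ∈ cs, D c') ∧ edgesL cs ≤ n) (x ^ edgesL cs) := by
    intro c cs
    rw [ind_mul]
    by_cases hc : (∀ c' ∈ c :: cs, D c') ∧ edgesL (c :: cs) ≤ n + 1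
    · rw [ind_pos hc]
      obtain ⟨hD, hE⟩ := hc
      have hE' : edges c + 1 + edgesL cs ≤ n + 1 := by rw [edgesL] at hE; exact hE
      rw [ind_pos ⟨⟨hD c List.mem_cons_self, by omega⟩,
        ⟨fun c' hc' => hD c' (List.mem_cons_of_mem _ hc'), by omega⟩⟩]
      rw [edgesL, pow_add]
    · rw [ind_neg hc]
      exact zero_le
  calc (∑' p : LTree × List LTree,
        ind ((∀ c ∈ p.1 :: p.2, D c) ∧ edgesL (p.1 :: p.2) ≤ n + 1) (x ^ edgesL (p.1 :: p.2)))
      ≤ ∑' p : LTree × List LTree,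
          ind (D p.1 ∧ edges p.1 ≤ n) (x ^ (edges p.1 + 1))
            * ind ((∀ c ∈ p.2, D c) ∧ edgesL p.2 ≤ n) (x ^ edgesL p.2) :=
        ENNReal.tsum_le_tsum fun p => hterm p.1 p.2
    _ = ∑' c : LTree, ∑' cs : List LTree,
          ind (D c ∧ edges c ≤ n) (x ^ (edges c + 1))
            * ind ((∀ c' ∈ cs, D c') ∧ edgesL cs ≤ n) (x ^ edgesL cs) := ENNReal.tsum_prod'
    _ = ∑' c : LTree, ind (D c ∧ edges c ≤ n) (x ^ (edges c + 1)) * LSt D n :=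
        tsum_congr fun c => ENNReal.tsum_mul_left
    _ = (∑' c : LTree, ind (D c ∧ edges c ≤ n) (x ^ (edges c + 1))) * LSt D n :=
        ENNReal.tsum_mul_right

lemma x_mul_six : x * (2 + (2 + 2)) = 2⁻¹ := by
  have h6 : (2 + (2 + 2) : ℝ≥0∞) = 6 := by norm_num
  have h12 : (12 : ℝ≥0∞) = 2 * 6 := by norm_num
  rw [x, h6, h12, ENNReal.mul_inv (Or.inl (by norm_num)) (Or.inl (by norm_num)), mul_assoc,
    ENNReal.inv_mul_cancel (by norm_num) (by norm_num), mul_one]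

lemma tZt_le_two : ∀ (n : ℕ) (l : ℤ), tZt n l ≤ 2 := by
  intro n
  induction n with
  | zero =>
    intro l
    rw [tZt_eq_LSt]
    exact (LSt_zero_le _).trans one_le_two
  | succ n ih =>
    intro l
    rw [tZt_eq_LSt]
    refine (LSt_succ_le _ n).trans ?_
    have hchild : (∑' c : LTree,
        ind ((|label c - l| ≤ 1 ∧ Valid c) ∧ edges c ≤ n) (x ^ (edges c + 1))) ≤ 2⁻¹ := by
      calc (∑' c : LTree,
            ind ((|label c - l| ≤ 1 ∧ Valid c) ∧ edges c ≤ n) (x ^ (edges c + 1)))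
          = ∑' c : LTree,
            ind (|label c - l| ≤ 1 ∧ (Valid c ∧ edges c ≤ n)) (x ^ (edges c + 1)) :=
            tsum_congr fun c => ind_congr and_assoc rfl
        _ = x * (tZt n (l-1) + (tZt n l + tZt n (l+1))) :=
            child_split (fun c => Valid c ∧ edges c ≤ n) l
        _ ≤ x * (2 + (2 + 2)) := by
            gcongr
            exacts [ih _, ih _, ih _]
        _ = 2⁻¹ := x_mul_six
    have hlst : LSt (fun c => |label c - l| ≤ 1 ∧ Valid c) n ≤ 2 := by
      rw [← tZt_eq_LSt]; exact ih l
    calc 1 + (∑' c : LTree,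
          ind ((|label c - l| ≤ 1 ∧ Valid c) ∧ edges c ≤ n) (x ^ (edges c + 1)))
          * LSt (fun c => |label c - l| ≤ 1 ∧ Valid c) n
        ≤ 1 + 2⁻¹ * 2 := by gcongr
      _ = 2 := by rw [ENNReal.inv_mul_cancel (by norm_num) (by norm_num)]; norm_num

lemma tZ_le_two (l : ℤ) : tZ l ≤ 2 := by
  rw [tZ, ENNReal.tsum_eq_iSup_sum]
  refine iSup_le fun s => ?_
  set n : ℕ := s.sup edges with hn
  have hsum : (∑ θ ∈ s, ind (label θ = l ∧ Valid θ) (x ^ edges θ))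
      = ∑ θ ∈ s, ind (label θ = l ∧ (Valid θ ∧ edges θ ≤ n)) (x ^ edges θ) := by
    refine Finset.sum_congr rfl fun θ hθ => ?_
    have hb : edges θ ≤ n := Finset.le_sup hθ
    exact ind_congr (by tauto) rfl
  rw [hsum]
  exact (ENNReal.sum_le_tsum s).trans (tZt_le_two n l)

lemma tZ_shift (l k : ℤ) : tZ (l + k) = tZ l := by
  rw [tZ, ← (shiftEquiv k).tsum_eq]
  refine tsum_congr fun θ => ?_
  have hc : (shiftEquiv k) θ = shift k θ := rfl
  rw [hc]
  refine ind_congr ?_ (by rw [edges_shift])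
  rw [label_shift, valid_shift_iff]
  constructor
  · rintro ⟨h1, h2⟩; exact ⟨by omega, h2⟩
  · rintro ⟨h1, h2⟩; exact ⟨by omega, h2⟩

lemma tZ_const (l : ℤ) : tZ l = tZ 0 := by
  have := tZ_shift 0 l
  rwa [zero_add] at this

lemma tZ_eq_two (l : ℤ) : tZ l = 2 := by
  have hz2 : tZ 0 ≤ 2 := tZ_le_two 0
  have hne : tZ 0 ≠ ⊤ := ne_top_of_le_ne_top (by norm_num) hz2
  have hrec := tZ_rec 0
  rw [tZ_const (0-1), tZ_const (0+1), ← tZ_const 0] at hrec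
  set r : ℝ := (tZ 0).toReal with hr
  have hxne : x ≠ ⊤ := by rw [x]; exact ENNReal.inv_ne_top.mpr (by norm_num)
  have hsne : tZ 0 + (tZ 0 + tZ 0) ≠ ⊤ := by
    simp [ENNReal.add_ne_top, hne]
  have hmne : x * (tZ 0 + (tZ 0 + tZ 0)) * tZ 0 ≠ ⊤ :=
    ENNReal.mul_ne_top (ENNReal.mul_ne_top hxne hsne) hne
  have hreal : r = 1 + (12 : ℝ)⁻¹ * (r + (r + r)) * r := by
    conv_lhs => rw [hr, hrec]
    rw [ENNReal.toReal_add (by norm_num) hmne, ENNReal.toReal_mul, ENNReal.toReal_mul,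
      ENNReal.toReal_add hne (by simp [ENNReal.add_ne_top, hne]),
      ENNReal.toReal_add hne hne]
    simp [x, hr]
  have hrle : r ≤ 2 := by
    rw [hr]
    calc (tZ 0).toReal ≤ (2 : ℝ≥0∞).toReal := ENNReal.toReal_mono (by norm_num) hz2
      _ = 2 := by simp
  have hr2 : r = 2 := by nlinarith [sq_nonneg (r - 2)]
  have h2 : tZ 0 = 2 := by
    rw [← ENNReal.ofReal_toReal hne, ← hr, hr2]
    norm_num
  rw [tZ_const l, h2]

lemma tS_le_tZ (l : ℤ) : tS l ≤ tZ l :=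
  ENNReal.tsum_le_tsum fun θ => ind_mono (fun h => ⟨h.1, h.2.1⟩)

lemma tS_le_two (l : ℤ) : tS l ≤ 2 := (tS_le_tZ l).trans_eq (tZ_eq_two l)

lemma tS_ne_top (l : ℤ) : tS l ≠ ⊤ := ne_top_of_le_ne_top (by norm_num) (tS_le_two l)

lemma one_le_tS (l : ℤ) (hl : 1 ≤ l) : 1 ≤ tS l := by
  rw [tS_rec l hl]; exact le_self_add

end
end LTreeSum

namespace LTreeSum
open LTree
noncomputable section

def tf (l : ℤ) : ℝ :=
  if l ≤ 0 then 0 else 2*(l:ℝ)*((l:ℝ)+3)/(((l:ℝ)+1)*((l:ℝ)+2))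

lemma tf_of_pos (l : ℤ) (hl : 1 ≤ l) :
    tf l = 2*(l:ℝ)*((l:ℝ)+3)/(((l:ℝ)+1)*((l:ℝ)+2)) := if_neg (by omega)

lemma tf_of_nonpos (l : ℤ) (hl : l ≤ 0) : tf l = 0 := if_pos hl

lemma tf_nonneg (l : ℤ) : 0 ≤ tf l := by
  rcases le_or_gt l 0 with h | h
  · rw [tf_of_nonpos l h]
  · rw [tf_of_pos l h]
    have hy : (1:ℝ) ≤ (l:ℝ) := by exact_mod_cast h
    apply div_nonneg <;> nlinarith

lemma tf_pos (l : ℤ) (hl : 1 ≤ l) : 0 < tf l := by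
  rw [tf_of_pos l hl]
  have hy : (1:ℝ) ≤ (l:ℝ) := by exact_mod_cast hl
  apply div_pos <;> nlinarith

lemma tf_le_two (l : ℤ) : tf l ≤ 2 := by
  rcases le_or_gt l 0 with h | h
  · rw [tf_of_nonpos l h]; norm_num
  · rw [tf_of_pos l h]
    have hy : (1:ℝ) ≤ (l:ℝ) := by exact_mod_cast h
    rw [div_le_iff₀ (by nlinarith)]
    nlinarith

lemma tf_rec_real (y : ℝ) (hy : 2 ≤ y) :
    2*y*(y+3)/((y+1)*(y+2))
      = 1 + 12⁻¹ * (2*(y-1)*(y+2)/(y*(y+1))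
          + (2*y*(y+3)/((y+1)*(y+2)) + 2*(y+1)*(y+4)/((y+2)*(y+3))))
          * (2*y*(y+3)/((y+1)*(y+2))) := by
  have h0 : y ≠ 0 := by nlinarith
  have h1 : y + 1 ≠ 0 := by nlinarith
  have h2 : y + 2 ≠ 0 := by nlinarith
  have h3 : y + 3 ≠ 0 := by nlinarith
  field_simp
  ring

lemma tf_rec (l : ℤ) (hl : 1 ≤ l) :
    tf l = 1 + (12:ℝ)⁻¹ * (tf (l-1) + (tf l + tf (l+1))) * tf l := by
  rcases eq_or_lt_of_le hl with h1 | h2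
  · rw [← h1]
    rw [show (1:ℤ) - 1 = 0 by norm_num, tf_of_nonpos 0 le_rfl,
      tf_of_pos 1 le_rfl, tf_of_pos (1+1) (by norm_num)]
    norm_num
  · have hl2 : (2:ℤ) ≤ l := h2
    set y : ℝ := (l:ℝ) with hy'
    have hy : (2:ℝ) ≤ y := by rw [hy']; exact_mod_cast hl2
    have e1 : tf (l-1) = 2*(y-1)*(y+2)/(y*(y+1)) := by
      rw [tf_of_pos (l-1) (by omega)]
      rw [hy']
      push_cast
      ring_nf
    have e2 : tf l = 2*y*(y+3)/((y+1)*(y+2)) := by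
      rw [tf_of_pos l hl]
    have e3 : tf (l+1) = 2*(y+1)*(y+4)/((y+2)*(y+3)) := by
      rw [tf_of_pos (l+1) (by omega)]
      rw [hy']
      push_cast
      ring_nf
    rw [e1, e2, e3]
    exact tf_rec_real y hy

def sf (l : ℤ) : ℝ := (tS l).toReal

lemma sf_nonneg (l : ℤ) : 0 ≤ sf l := ENNReal.toReal_nonneg

lemma sf_le_two (l : ℤ) : sf l ≤ 2 := by
  calc (tS l).toReal ≤ (2 : ℝ≥0∞).toReal := ENNReal.toReal_mono (by norm_num) (tS_le_two l)
    _ = 2 := by simp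

lemma one_le_sf (l : ℤ) (hl : 1 ≤ l) : 1 ≤ sf l := by
  calc (1:ℝ) = (1 : ℝ≥0∞).toReal := by simp
    _ ≤ (tS l).toReal := ENNReal.toReal_mono (tS_ne_top l) (one_le_tS l hl)

lemma sf_pos (l : ℤ) (hl : 1 ≤ l) : 0 < sf l := lt_of_lt_of_le one_pos (one_le_sf l hl)

lemma sf_of_nonpos (l : ℤ) (hl : l ≤ 0) : sf l = 0 := by
  rw [sf, tS_eq_zero l hl, ENNReal.toReal_zero]

lemma sf_rec (l : ℤ) (hl : 1 ≤ l) :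
    sf l = 1 + (12:ℝ)⁻¹ * (sf (l-1) + (sf l + sf (l+1))) * sf l := by
  have hrec := tS_rec l hl
  have hxne : x ≠ ⊤ := by rw [x]; exact ENNReal.inv_ne_top.mpr (by norm_num)
  have hne : ∀ m : ℤ, tS m ≠ ⊤ := tS_ne_top
  have hsne : tS (l-1) + (tS l + tS (l+1)) ≠ ⊤ := by
    simp [ENNReal.add_ne_top, hne]
  have hmne : x * (tS (l-1) + (tS l + tS (l+1))) * tS l ≠ ⊤ :=
    ENNReal.mul_ne_top (ENNReal.mul_ne_top hxne hsne) (hne l)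
  calc sf l = (tS l).toReal := rfl
    _ = (1 + x * (tS (l-1) + (tS l + tS (l+1))) * tS l).toReal := by rw [← hrec]
    _ = 1 + (12:ℝ)⁻¹ * (sf (l-1) + (sf l + sf (l+1))) * sf l := by
        rw [ENNReal.toReal_add (by norm_num) hmne, ENNReal.toReal_mul, ENNReal.toReal_mul,
          ENNReal.toReal_add (hne _) (by simp [ENNReal.add_ne_top, hne]),
          ENNReal.toReal_add (hne _) (hne _)]
        simp [x, sf]

/-- Solved form of the recursion. -/
lemma solved {g : ℤ → ℝ} (l : ℤ)
    (hg : g l = 1 + (12:ℝ)⁻¹ * (g (l-1) + (g l + g (l+1))) * g l) (hpos : g l ≠ 0) :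
    g (l+1) = (12 * g l - 12) / g l - g l - g (l-1) := by
  have h2 : g (l-1) + (g l + g (l+1)) = (12 * g l - 12) / g l := by
    rw [eq_div_iff hpos]
    linear_combination (-12 : ℝ) * hg
  linarith [h2]

-- ℕ-indexed versions
def S (n : ℕ) : ℝ := sf (n : ℤ)
def T (n : ℕ) : ℝ := tf (n : ℤ)

lemma S_zero : S 0 = 0 := sf_of_nonpos 0 le_rfl
lemma T_zero : T 0 = 0 := tf_of_nonpos 0 le_rfl

lemma S_sol (n : ℕ) (hn : 1 ≤ n) :
    S (n+1) = (12 * S n - 12) / S n - S n - S (n-1) := by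
  have hl : (1:ℤ) ≤ (n:ℤ) := by exact_mod_cast hn
  have h := solved (g := sf) (n:ℤ) (sf_rec (n:ℤ) hl) (ne_of_gt (sf_pos _ hl))
  have e1 : ((n:ℤ) + 1) = ((n+1 : ℕ) : ℤ) := by push_cast; ring
  have e2 : ((n:ℤ) - 1) = ((n-1 : ℕ) : ℤ) := by omega
  rw [e1, e2] at h
  exact h

lemma T_sol (n : ℕ) (hn : 1 ≤ n) :
    T (n+1) = (12 * T n - 12) / T n - T n - T (n-1) := by
  have hl : (1:ℤ) ≤ (n:ℤ) := by exact_mod_cast hn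
  have h := solved (g := tf) (n:ℤ) (tf_rec (n:ℤ) hl) (ne_of_gt (tf_pos _ hl))
  have e1 : ((n:ℤ) + 1) = ((n+1 : ℕ) : ℤ) := by push_cast; ring
  have e2 : ((n:ℤ) - 1) = ((n-1 : ℕ) : ℤ) := by omega
  rw [e1, e2] at h
  exact h

lemma S_T_bounds (n : ℕ) (hn : 1 ≤ n) :
    1 ≤ S n ∧ S n ≤ 2 ∧ 0 < T n ∧ T n ≤ 2 := by
  have hl : (1:ℤ) ≤ (n:ℤ) := by exact_mod_cast hn
  exact ⟨one_le_sf _ hl, sf_le_two _, tf_pos _ hl, tf_le_two _⟩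

/-- The difference recursion. -/
lemma diff_rec (m : ℕ) (hm : 1 ≤ m) :
    S (m+1) - T (m+1)
      = (12 / (S m * T m)) * (S m - T m) - (S m - T m) - (S (m-1) - T (m-1)) := by
  obtain ⟨hS1, -, hT0, -⟩ := S_T_bounds m hm
  have hSne : S m ≠ 0 := by linarith
  have hTne : T m ≠ 0 := ne_of_gt hT0
  rw [S_sol m hm, T_sol m hm]
  field_simp
  ring

lemma S_one_eq_T_one : S 1 = T 1 := by
  by_contra hne
  set e : ℝ := |S 1 - T 1| with he
  have he0 : 0 < e := abs_pos.mpr (sub_ne_zero.mpr hne)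
  set sg : ℝ := if T 1 < S 1 then 1 else -1 with hsg
  set v : ℕ → ℝ := fun n => sg * (S n - T n) with hv
  have hv1 : v 1 = e := by
    rw [hv, hsg]
    rcases lt_or_ge (T 1) (S 1) with h | h
    · rw [if_pos h, he, abs_of_pos (by linarith)]; ring
    · have hlt : S 1 < T 1 := lt_of_le_of_ne h (by tauto)
      rw [if_neg (not_lt.mpr h), he, abs_of_neg (by linarith)]; ring
  have hv0 : v 0 = 0 := by rw [hv]; simp [S_zero, T_zero]
  have hvrec : ∀ m : ℕ, 1 ≤ m →
      v (m+1) = (12 / (S m * T m)) * v m - v m - v (m-1) := by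
    intro m hm
    rw [hv]
    simp only []
    rw [diff_rec m hm]
    ring
  have hA : ∀ m : ℕ, 1 ≤ m → 3 ≤ 12 / (S m * T m) := by
    intro m hm
    obtain ⟨hS1, hS2, hT0, hT2⟩ := S_T_bounds m hm
    have hP : 0 < S m * T m := by nlinarith
    rw [le_div_iff₀ hP]
    nlinarith
  have hvle : ∀ n : ℕ, v n ≤ 4 := by
    intro n
    rcases Nat.eq_zero_or_pos n with h | h
    · rw [h, hv0]; norm_num
    · obtain ⟨hS1, hS2, hT0, hT2⟩ := S_T_bounds n h
      show sg * (S n - T n) ≤ 4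
      rcases lt_or_ge (T 1) (S 1) with hc | hc <;> rw [hsg]
      · rw [if_pos hc]; nlinarith
      · rw [if_neg (not_lt.mpr hc)]; nlinarith
  have grow : ∀ n : ℕ, 1 ≤ n → (n : ℝ) * e ≤ v n ∧ v n + e ≤ v (n+1) := by
    intro n hn
    induction n with
    | zero => omega
    | succ m ih =>
      rcases Nat.eq_zero_or_pos m with hm0 | hm1
      · subst hm0
        refine ⟨by rw [hv1]; norm_num, ?_⟩
        have h := hvrec 1 le_rfl
        rw [show (1:ℕ) - 1 = 0 from rfl, hv0, hv1] at h
        have hA1 := hA 1 le_rfl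
        have : 3 * e ≤ (12 / (S 1 * T 1)) * e :=
          mul_le_mul_of_nonneg_right hA1 (le_of_lt he0)
        rw [hv1]
        nlinarith
      · obtain ⟨hge, hstep⟩ := ih hm1
        have hvm1 : ((m:ℝ) + 1) * e ≤ v (m+1) := by
          calc ((m:ℝ) + 1) * e = (m:ℝ) * e + e := by ring
            _ ≤ v m + e := by linarith
            _ ≤ v (m+1) := hstep
        refine ⟨by push_cast; linarith, ?_⟩
        have h := hvrec (m+1) (by omega)
        rw [show m + 1 - 1 = m from rfl] at h
        have hA1 := hA (m+1) (by omega)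
        have hvpos : 0 ≤ v (m+1) := by nlinarith [mul_nonneg (le_of_lt he0) (Nat.cast_nonneg m)]
        have hmul : 3 * v (m+1) ≤ (12 / (S (m+1) * T (m+1))) * v (m+1) :=
          mul_le_mul_of_nonneg_right hA1 hvpos
        nlinarith
  obtain ⟨n, hn⟩ := exists_nat_gt (4 / e)
  have hn1 : 1 ≤ n := by
    by_contra h
    interval_cases n
    · simp at hn
      nlinarith [div_pos (by norm_num : (0:ℝ) < 4) he0]
  have h1 := (grow n hn1).1
  have h2 : 4 < (n:ℝ) * e := by
    rw [div_lt_iff₀ he0] at hn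
    linarith
  have := hvle n
  linarith

lemma S_eq_T : ∀ n : ℕ, S n = T n := by
  have key : ∀ n : ℕ, S n = T n ∧ S (n+1) = T (n+1) := by
    intro n
    induction n with
    | zero => exact ⟨by rw [S_zero, T_zero], S_one_eq_T_one⟩
    | succ m ih =>
      obtain ⟨h1, h2⟩ := ih
      refine ⟨h2, ?_⟩
      rw [S_sol (m+1) (by omega), T_sol (m+1) (by omega),
        show m + 1 - 1 = m from rfl, h1, h2]
  exact fun n => (key n).1

lemma sf_eq_tf (l : ℤ) (hl : 1 ≤ l) : sf l = tf l := by
  have h : l = ((l.toNat : ℕ) : ℤ) := (Int.toNat_of_nonneg (by omega)).symm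
  rw [h]
  exact S_eq_T l.toNat

lemma tS_eq_ofReal (l : ℤ) (hl : 1 ≤ l) : tS l = ENNReal.ofReal (tf l) := by
  rw [← sf_eq_tf l hl, sf, ENNReal.ofReal_toReal (tS_ne_top l)]

end
end LTreeSum



namespace LTreeSum
open LTree
noncomputable section

def tSge0 (l : ℤ) : ℝ≥0∞ :=
  ∑' θ : LTree, ind (label θ = l ∧ (Valid θ ∧ 0 ≤ minLabel θ)) (x ^ edges θ)

def tM (l : ℤ) : ℝ≥0∞ :=
  ∑' θ : LTree, ind (label θ = l ∧ (Valid θ ∧ minLabel θ = 0)) (x ^ edges θ)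

lemma tSge0_eq (l : ℤ) : tSge0 l = tS (l+1) := by
  rw [tSge0, tS]
  conv_rhs => rw [← (shiftEquiv 1).tsum_eq]
  refine tsum_congr fun θ => ?_
  have hc : (shiftEquiv 1) θ = shift 1 θ := rfl
  rw [hc]
  refine ind_congr ?_ (by rw [edges_shift])
  rw [label_shift, valid_shift_iff, minLabel_shift]
  constructor
  · rintro ⟨a, b, c⟩; exact ⟨by omega, b, by omega⟩
  · rintro ⟨a, b, c⟩; exact ⟨by omega, b, by omega⟩

lemma tSge0_split (l : ℤ) : tSge0 l = tM l + tS l := by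
  rw [tSge0, tM, tS, ← ENNReal.tsum_add]
  refine tsum_congr fun θ => ?_
  by_cases hV : label θ = l ∧ Valid θ
  · by_cases h0 : minLabel θ = 0
    · rw [ind_pos ⟨hV.1, hV.2, by omega⟩ _, ind_pos ⟨hV.1, hV.2, h0⟩ _,
        ind_neg (by rintro ⟨-, -, h⟩; omega) _, add_zero]
    · by_cases h1 : 1 ≤ minLabel θ
      · rw [ind_pos ⟨hV.1, hV.2, by omega⟩ _, ind_neg (by rintro ⟨-, -, h⟩; exact h0 h) _,
          ind_pos ⟨hV.1, hV.2, h1⟩ _, zero_add]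
      · rw [ind_neg (by rintro ⟨-, -, h⟩; omega) _,
          ind_neg (by rintro ⟨-, -, h⟩; exact h0 h) _,
          ind_neg (by rintro ⟨-, -, h⟩; exact h1 h) _, add_zero]
  · rw [ind_neg (by rintro ⟨a, b, -⟩; exact hV ⟨a, b⟩) _,
      ind_neg (by rintro ⟨a, b, -⟩; exact hV ⟨a, b⟩) _,
      ind_neg (by rintro ⟨a, b, -⟩; exact hV ⟨a, b⟩) _, add_zero]

lemma rho_min0 (l : ℤ) : rho l {θ : LTree | θ.minLabel = 0} = 2⁻¹ * tM l := by
  rw [rho, tM, ← ENNReal.tsum_mul_left]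
  refine tsum_congr fun θ => ?_
  by_cases h : θ ∈ ({θ : LTree | θ.label = l ∧ θ.Valid} ∩ {θ : LTree | θ.minLabel = 0})
  · rw [Set.indicator_of_mem h]
    obtain ⟨⟨h1, h2⟩, h3⟩ := h
    rw [ind_pos ⟨h1, h2, h3⟩ _]
    rfl
  · rw [Set.indicator_of_notMem h,
      ind_neg (fun hh => h ⟨⟨hh.1, hh.2.1⟩, hh.2.2⟩) _, mul_zero]

lemma endgame_real (y : ℝ) (hy : 1 ≤ y) :
    (2:ℝ)⁻¹ * (2*(y+1)*(y+4)/((y+2)*(y+3)) - 2*y*(y+3)/((y+1)*(y+2)))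
      = 4 / ((y+1)*(y+2)*(y+3)) := by
  have h1 : y + 1 ≠ 0 := by nlinarith
  have h2 : y + 2 ≠ 0 := by nlinarith
  have h3 : y + 3 ≠ 0 := by nlinarith
  field_simp
  ring

lemma tf_succ_formula (l : ℤ) (hl : 1 ≤ l) :
    tf (l+1) = 2*((l:ℝ)+1)*((l:ℝ)+4)/((((l:ℝ))+2)*(((l:ℝ))+3)) := by
  rw [tf_of_pos (l+1) (by omega)]
  push_cast
  ring_nf

theorem rho_min_eq (l : ℤ) (hl : 1 ≤ l) :
    rho l {θ : LTree | θ.minLabel = 0}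
      = ENNReal.ofReal (4 / (((l : ℝ) + 1) * ((l : ℝ) + 2) * ((l : ℝ) + 3))) := by
  set y : ℝ := (l:ℝ) with hy'
  have hy : (1:ℝ) ≤ y := by rw [hy']; exact_mod_cast hl
  have e2 : tf l = 2*y*(y+3)/((y+1)*(y+2)) := tf_of_pos l hl
  have e3 : tf (l+1) = 2*(y+1)*(y+4)/((y+2)*(y+3)) := tf_succ_formula l hl
  have hdiff : (2:ℝ)⁻¹ * (tf (l+1) - tf l) = 4 / ((y+1)*(y+2)*(y+3)) := by
    rw [e2, e3]; exact endgame_real y hy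
  have hd_nonneg : 0 ≤ tf (l+1) - tf l := by
    have hpos : 0 < 4 / ((y+1)*(y+2)*(y+3)) := by positivity
    nlinarith [hdiff]
  have hM : tM l = ENNReal.ofReal (tf (l+1) - tf l) := by
    have hsplit : tM l + tS l = tS (l+1) := by rw [← tSge0_split, tSge0_eq]
    have h1 : tS l = ENNReal.ofReal (tf l) := tS_eq_ofReal l hl
    have h2 : tS (l+1) = ENNReal.ofReal (tf (l+1)) := tS_eq_ofReal (l+1) (by omega)
    have hadd : ENNReal.ofReal (tf (l+1) - tf l) + tS l = tS (l+1) := by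
      rw [h1, h2, ← ENNReal.ofReal_add hd_nonneg (tf_nonneg l)]
      congr 1
      ring
    have heq := hsplit.trans hadd.symm
    rw [add_comm (tM l) (tS l), add_comm (ENNReal.ofReal (tf (l+1) - tf l)) (tS l)] at heq
    exact (ENNReal.add_right_inj (tS_ne_top l)).mp heq
  rw [rho_min0, hM]
  have h2inv : (2:ℝ≥0∞)⁻¹ = ENNReal.ofReal (2⁻¹) := by
    rw [ENNReal.ofReal_inv_of_pos (by norm_num : (0:ℝ) < 2)]
    norm_num
  rw [h2inv, ← ENNReal.ofReal_mul (by norm_num)]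
  rw [hdiff]

end
end LTreeSum

/-- For every integer `l ≥ 1`, the `ρ_l`-probability that the minimal label equals `0`
is `4/((l+1)(l+2)(l+3))`. -/
theorem rho_minLabel_eq_zero (l : ℤ) (hl : 1 ≤ l) :
    rho l {θ : LTree | θ.minLabel = 0}
      = ENNReal.ofReal (4 / (((l : ℝ) + 1) * ((l : ℝ) + 2) * ((l : ℝ) + 3))) :=
  LTreeSum.rho_min_eq l hl
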